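/- arXiv:1207.3615 — 2 statements merged into one kernel-verified Lean document; each statement's English description precedes it below -/
import Mathlib

section
/- Let (g_n) be a sequence of Borel subsets of the d-dimensional torus T^d and (ξ_n) independent uniformly distributed random points in T^d. Then almost surely the Lebesgue measure of E = limsup_{n→∞}(g_n + ξ_n) equals 0 when ∑_n L(g_n) < ∞ and equals 1 when ∑_n L(g_n) = ∞. -/
/-!
Translation preserves Haar measure, so the convergent case is the first Borel–Cantelli lemma,
for every choice of the translations. In the divergent case fix a point `x`: the events
`x ∈ g n + ξ n = {ξ n ∈ x - g n}` are independent of probabilities `L (g n)`, so by the second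
Borel–Cantelli lemma `x ∈ E` almost surely. Fubini turns "for every `x`, almost surely" into
"almost surely, for almost every `x`".
-/

open MeasureTheory ProbabilityTheory Filter

theorem ProbabilityTheory.iIndepFun.iIndepSet_preimage {Ω ι β : Type*} [MeasurableSpace Ω]
    [MeasurableSpace β] {P : Measure Ω} {ξ : ι → Ω → β} (h : iIndepFun ξ P)
    (hξ : ∀ i, Measurable (ξ i)) {s : ι → Set β} (hs : ∀ i, MeasurableSet (s i)) :
    iIndepSet (fun i => ξ i ⁻¹' s i) P := by
  rw [iIndepSet_iff_meas_biInter fun i => hξ i (hs i)]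
  exact fun t => h.measure_inter_preimage_eq_mul t fun i _ => hs i

namespace RandomCovering

variable {G : Type*} [AddGroup G]

theorem image_add_right_eq_preimage_sub (s : Set G) (c : G) : (· + c) '' s = (· - c) ⁻¹' s := by
  simp [Set.image_add_right, sub_eq_add_neg]

variable [MeasurableSpace G]

theorem measure_limsup_translate_eq_zero [MeasurableAdd G] (μ : Measure G)
    [μ.IsAddRightInvariant] (g : ℕ → Set G) (c : ℕ → G) (h : ∑' n, μ (g n) ≠ ⊤) :
    μ (limsup (fun n => (· + c n) '' g n) atTop) = 0 := by
  refine measure_limsup_atTop_eq_zero ?_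
  simpa only [Set.image_add_right, measure_preimage_add_right] using h

variable [MeasurableAdd₂ G] [MeasurableNeg G] {Ω : Type*} [MeasurableSpace Ω] {P : Measure Ω}
  {g : ℕ → Set G} {ξ : ℕ → Ω → G}

theorem measurableSet_limsup_translate (hg : ∀ n, MeasurableSet (g n))
    (hξ : ∀ n, Measurable (ξ n)) :
    MeasurableSet {p : Ω × G | p.2 ∈ limsup (fun n => (· + ξ n p.1) '' g n) atTop} := by
  have : {p : Ω × G | p.2 ∈ limsup (fun n => (· + ξ n p.1) '' g n) atTop} =
      limsup (fun n => {p : Ω × G | p.2 - ξ n p.1 ∈ g n}) atTop := by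
    ext p
    simp only [Set.mem_ofPred_eq, mem_limsup_iff_frequently_mem, image_add_right_eq_preimage_sub,
      Set.mem_preimage]
  rw [this]
  exact .measurableSet_limsup fun n => (measurable_snd.sub ((hξ n).comp measurable_fst)) (hg n)

theorem ae_mem_limsup_translate [IsProbabilityMeasure P] (μ : Measure G)
    [μ.IsAddLeftInvariant] [μ.IsNegInvariant] (hg : ∀ n, MeasurableSet (g n))
    (hξ : ∀ n, Measurable (ξ n)) (hindep : iIndepFun ξ P) (hlaw : ∀ n, P.map (ξ n) = μ)
    (h : ∑' n, μ (g n) = ⊤) (x : G) :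
    ∀ᵐ ω ∂P, x ∈ limsup (fun n => (· + ξ n ω) '' g n) atTop := by
  have hs : ∀ n, MeasurableSet ((x - ·) ⁻¹' g n) := fun n =>
    measurable_const.sub measurable_id (hg n)
  have hprob : ∀ n, P (ξ n ⁻¹' ((x - ·) ⁻¹' g n)) = μ (g n) := fun n => by
    rw [← Measure.map_apply (hξ n) (hs n), hlaw n]
    exact (Measure.measurePreserving_sub_left μ x).measure_preimage (hg n).nullMeasurableSet
  have := measure_limsup_eq_one (fun n => hξ n (hs n)) (hindep.iIndepSet_preimage hξ hs)
    (by rwa [tsum_congr hprob])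
  filter_upwards [(prob_compl_eq_zero_iff (.measurableSet_limsup fun n => hξ n (hs n))).2 this]
    with ω hω
  simpa only [Set.mem_ofPred_eq, mem_limsup_iff_frequently_mem, image_add_right_eq_preimage_sub,
      Set.mem_preimage] using hω

theorem ae_measure_limsup_translate_eq_measure_univ [IsProbabilityMeasure P] (μ : Measure G)
    [μ.IsAddLeftInvariant] [μ.IsNegInvariant] (hg : ∀ n, MeasurableSet (g n))
    (hξ : ∀ n, Measurable (ξ n)) (hindep : iIndepFun ξ P) (hlaw : ∀ n, P.map (ξ n) = μ)
    (h : ∑' n, μ (g n) = ⊤) :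
    ∀ᵐ ω ∂P, μ (limsup (fun n => (· + ξ n ω) '' g n) atTop) = μ Set.univ := by
  have : IsFiniteMeasure μ := hlaw 0 ▸ inferInstance
  have hS := measurableSet_limsup_translate hg hξ
  filter_upwards [(Measure.ae_ae_comm (μ := P) (ν := μ) hS).2
    (ae_of_all _ (ae_mem_limsup_translate μ hg hξ hindep hlaw h))] with ω hω
  exact (ae_mem_iff_measure_eq (measurable_prodMk_left hS).nullMeasurableSet).1 hω

end RandomCovering

open RandomCovering

instance : IsProbabilityMeasure (volume : Measure UnitAddCircle) :=
  ⟨UnitAddCircle.measure_univ⟩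

instance (d : ℕ) : (volume : Measure (Fin d → UnitAddCircle)).IsNegInvariant :=
  Measure.pi.isNegInvariant _

theorem random_covering_torus_measure_dichotomy_general
    {Ω : Type*} [MeasurableSpace Ω] (P : Measure Ω) [IsProbabilityMeasure P]
    (d : ℕ)
    (g : ℕ → Set (Fin d → UnitAddCircle)) (hg : ∀ n, MeasurableSet (g n))
    (ξ : ℕ → Ω → (Fin d → UnitAddCircle))
    (hmeas : ∀ n, Measurable (ξ n))
    (hindep : iIndepFun ξ P)
    (hunif : ∀ n, Measure.map (ξ n) P = volume) :
    (∑' n, volume (g n) ≠ ⊤ →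
      ∀ᵐ ω ∂P, volume (limsup (fun n => (· + ξ n ω) '' g n) atTop) = 0) ∧
    (∑' n, volume (g n) = ⊤ →
      ∀ᵐ ω ∂P, volume (limsup (fun n => (· + ξ n ω) '' g n) atTop) = 1) := by
  refine ⟨fun h => .of_forall fun ω => measure_limsup_translate_eq_zero volume g _ h, fun h => ?_⟩
  filter_upwards [ae_measure_limsup_translate_eq_measure_univ volume hg hmeas hindep hunif h]
    with ω hω
  rwa [measure_univ] at hω

/-- **Random covering of the torus `𝕋^d`: measure dichotomy.**
If `(g n)` are Borel subsets of the `d`-torus and `(ξ n)` are independent uniformly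
distributed random points of the torus, then almost surely the random covering set
`E = limsup (g n + ξ n)` has Lebesgue measure `0` when `∑ L(g n) < ∞` and measure `1`
when `∑ L(g n) = ∞`. -/
theorem random_covering_torus_measure_dichotomy
    {Ω : Type*} [MeasurableSpace Ω] (P : Measure Ω) [IsProbabilityMeasure P]
    (d : ℕ) (hd : 0 < d)
    (g : ℕ → Set (Fin d → UnitAddCircle)) (hg : ∀ n, MeasurableSet (g n))
    (ξ : ℕ → Ω → (Fin d → UnitAddCircle))
    (hmeas : ∀ n, Measurable (ξ n))
    (hindep : iIndepFun ξ P)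
    (hunif : ∀ n, Measure.map (ξ n) P = volume) :
    (∑' n, volume (g n) ≠ ⊤ →
      ∀ᵐ ω ∂P, volume (limsup (fun n => (· + ξ n ω) '' g n) atTop) = 0) ∧
    (∑' n, volume (g n) = ⊤ →
      ∀ᵐ ω ∂P, volume (limsup (fun n => (· + ξ n ω) '' g n) atTop) = 1) :=
  random_covering_torus_measure_dichotomy_general P d g hg ξ hmeas hindep hunif
end

section
/- Let s be non-integral with 0 < s < d and let T : R^d → R^d be an affine injection. Then there exists a constant D_0 < ∞, depending only on d and s, such that ∫_{[0,1]^d} |T(x)|^{−s} dL(x) ≤ D_0 / Φ^s(T). -/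
open MeasureTheory Filter

/-- The singular value function `Φ^s(α) = α 0 ⋯ α (m-2) · (α (m-1))^(s-(m-1))`,
where `m = ⌈s⌉` is the integer with `m - 1 < s ≤ m` and `α` lists the singular values
in decreasing order. -/
noncomputable def svf (α : ℕ → ℝ) (s : ℝ) : ℝ :=
  (∏ i ∈ Finset.range (⌈s⌉₊ - 1), α i) * α (⌈s⌉₊ - 1) ^ (s - ((⌈s⌉₊ : ℝ) - 1))

/-!
The set where `‖T x‖ < r` is the preimage under `V` of an ellipsoid with semi-axes `r / αᵢ`,
so inside a ball of radius `R` it lies in a box of side lengths `min (2R) (2r / αᵢ)`. Bounding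
the first `k = ⌈s⌉ - 1` factors by `2r / αᵢ`, the last `d - k - 1` by `2R` and keeping the
minimum at index `k` gives
`volume {‖T x‖ < r} ≲ r ^ k min (2R) (2r / α_k) / (α₀ ⋯ α_{k-1})`.
The layer-cake formula turns `∫ ‖T x‖ ^ (-s)` into the integral of these volumes at
`r = t ^ (-1/s)`, a one-dimensional integral that converges at both ends exactly because
`k < s < k + 1`, and its value is `Φ^s(T)⁻¹` up to a constant depending on `d` and `s`.
-/

open Set

theorem Finset.prod_range_min_le {M : Type*} [CommMonoid M] [LinearOrder M] [MulLeftMono M]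
    (A : M) (x : ℕ → M) {k d : ℕ} (hkd : k < d) :
    ∏ i ∈ Finset.range d, min A (x i) ≤
      (∏ i ∈ Finset.range k, x i) * min A (x k) * A ^ (d - (k + 1)) := by
  rw [← Finset.prod_range_mul_prod_Ico _ hkd, Finset.prod_range_succ]
  refine mul_le_mul' (mul_le_mul' (Finset.prod_le_prod' fun i _ => min_le_right A (x i)) le_rfl) ?_
  exact (Finset.prod_le_pow_card _ _ A fun i _ => min_le_left A (x i)).trans_eq
      (by rw [Nat.card_Ico])

theorem lintegral_Ioc_zero_rpow_neg {a T : ℝ} (ha : a < 1) (hT : 0 ≤ T) :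
    ∫⁻ t in Ioc 0 T, ENNReal.ofReal (t ^ (-a)) = ENNReal.ofReal (T ^ (1 - a) / (1 - a)) := by
  have hint : IntegrableOn (fun t : ℝ => t ^ (-a)) (Ioc 0 T) :=
    (intervalIntegral.intervalIntegrable_rpow' (by linarith : (-1:ℝ) < -a)).1
  rw [← ofReal_integral_eq_lintegral_ofReal hint, ← intervalIntegral.integral_of_le hT,
    integral_rpow (Or.inl (by linarith)), Real.zero_rpow (by linarith)]
  · ring_nf
  · filter_upwards [ae_restrict_mem measurableSet_Ioc] with t ht using Real.rpow_nonneg ht.1.le _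

theorem lintegral_Ioi_rpow_neg {a T : ℝ} (ha : 1 < a) (hT : 0 < T) :
    ∫⁻ t in Ioi T, ENNReal.ofReal (t ^ (-a)) = ENNReal.ofReal (T ^ (1 - a) / (a - 1)) := by
  rw [← ofReal_integral_eq_lintegral_ofReal (integrableOn_Ioi_rpow_of_lt (by linarith) hT),
    integral_Ioi_rpow_of_lt (by linarith) hT]
  · congr 1
    rw [show -a + 1 = 1 - a by ring, neg_div, ← div_neg, neg_sub]
  · filter_upwards [ae_restrict_mem measurableSet_Ioi] with t ht
      using Real.rpow_nonneg (hT.trans ht).le _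

theorem lintegral_rpow_neg_le_lintegral_measure_lt {X : Type*} [MeasurableSpace X] (μ : Measure X)
    {f : X → ℝ} (hf₀ : ∀ x, 0 ≤ f x) (hf : AEMeasurable f μ) {s : ℝ} (hs : 0 < s) :
    ∫⁻ x, ENNReal.ofReal (f x ^ (-s)) ∂μ ≤
      ∫⁻ t in Ioi 0, μ {x | f x < t ^ (-s⁻¹)} := by
  rw [lintegral_eq_lintegral_meas_lt μ (ae_of_all _ fun x => Real.rpow_nonneg (hf₀ x) _)
    (hf.pow_const _)]
  refine setLIntegral_mono' measurableSet_Ioi fun t (ht : 0 < t) => measure_mono fun x hx => ?_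
  have hx : t < f x ^ (-s) := hx
  have hfx : 0 < f x := by
    refine (hf₀ x).lt_of_ne' fun h => ?_
    rw [h, Real.zero_rpow (by linarith)] at hx
    exact ht.not_gt hx
  calc f x = (f x ^ (-s)) ^ (-s⁻¹) := by
        rw [← Real.rpow_mul hfx.le, neg_mul_neg, mul_inv_cancel₀ hs.ne', Real.rpow_one]
    _ < t ^ (-s⁻¹) := Real.rpow_lt_rpow_of_neg ht hx (by simpa using hs)

theorem Real.rpow_neg_inv_pow {t : ℝ} (ht : 0 ≤ t) (s : ℝ) (j : ℕ) :
    (t ^ (-s⁻¹)) ^ j = t ^ (-(j / s)) := by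
  rw [← Real.rpow_natCast, ← Real.rpow_mul ht]
  ring_nf

theorem lintegral_Ioc_rpow_pow_mul_min_le {k : ℕ} {s A c T : ℝ} (hs : 0 < s) (hks : k < s)
    (hA : 0 ≤ A) (hT : 0 ≤ T) :
    ∫⁻ t in Ioc 0 T, ENNReal.ofReal ((t ^ (-s⁻¹)) ^ k * min A (c * t ^ (-s⁻¹))) ≤
      ENNReal.ofReal (A * (T ^ (1 - k / s) / (1 - k / s))) :=
  calc _ ≤ ∫⁻ t in Ioc 0 T, ENNReal.ofReal A * ENNReal.ofReal (t ^ (-(k / s))) :=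
        setLIntegral_mono' measurableSet_Ioc fun t ht => by
          rw [← ENNReal.ofReal_mul hA, ← Real.rpow_neg_inv_pow ht.1.le, mul_comm]
          gcongr
          · exact pow_nonneg (Real.rpow_nonneg ht.1.le _) _
          · exact min_le_left A _
    _ = _ := by
      rw [lintegral_const_mul' _ _ ENNReal.ofReal_ne_top,
        lintegral_Ioc_zero_rpow_neg ((div_lt_one hs).mpr hks) hT, ENNReal.ofReal_mul hA]

theorem lintegral_Ioi_rpow_pow_mul_min_le {k : ℕ} {s A c T : ℝ} (hs : 0 < s)
    (hsk : s < k + 1) (hc : 0 ≤ c) (hT : 0 < T) :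
    ∫⁻ t in Ioi T, ENNReal.ofReal ((t ^ (-s⁻¹)) ^ k * min A (c * t ^ (-s⁻¹))) ≤
      ENNReal.ofReal (c * (T ^ (1 - (k + 1 : ℕ) / s) / ((k + 1 : ℕ) / s - 1))) :=
  calc _ ≤ ∫⁻ t in Ioi T, ENNReal.ofReal c * ENNReal.ofReal (t ^ (-((k + 1 : ℕ) / s))) :=
        setLIntegral_mono' measurableSet_Ioi fun t ht => by
          have ht₀ : 0 ≤ t := hT.le.trans ht.le
          rw [← ENNReal.ofReal_mul hc, ← Real.rpow_neg_inv_pow ht₀, pow_succ]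
          refine ENNReal.ofReal_le_ofReal ?_
          calc _ ≤ (t ^ (-s⁻¹)) ^ k * (c * t ^ (-s⁻¹)) := by
                gcongr; exact min_le_right A _
            _ = _ := by ring
    _ = _ := by
      rw [lintegral_const_mul' _ _ ENNReal.ofReal_ne_top,
        lintegral_Ioi_rpow_neg ((one_lt_div hs).mpr (by push_cast; linarith)) hT,
        ENNReal.ofReal_mul hc]

theorem lintegral_rpow_pow_mul_min_le {k : ℕ} {s A c : ℝ} (hs : 0 < s) (hks : k < s)
    (hsk : s < k + 1) (hA : 0 < A) (hc : 0 < c) :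
    ∫⁻ t in Ioi 0, ENNReal.ofReal ((t ^ (-s⁻¹)) ^ k * min A (c * t ^ (-s⁻¹))) ≤
      ENNReal.ofReal ((s / (s - k) + s / (k + 1 - s)) * A * (c / A) ^ (s - k)) := by
  -- `T` is where the two terms of the minimum cross.
  set T := (c / A) ^ s
  have hT : 0 < T := by positivity
  have hTpow : ∀ j : ℕ, T ^ (1 - j / s) = (c / A) ^ (s - j) := fun j => by
    rw [← Real.rpow_mul (by positivity)]; congr 1; field_simp
  have hca : (c / A) ^ (s - (k + 1 : ℕ)) * (c / A) = (c / A) ^ (s - k) := by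
    rw [← Real.rpow_add_one (by positivity)]; push_cast; ring_nf
  have hnear : 0 < 1 - k / s := sub_pos.mpr ((div_lt_one hs).mpr hks)
  have hfar : 0 < (k + 1 : ℕ) / s - 1 :=
    sub_pos.mpr ((one_lt_div hs).mpr (by push_cast; linarith))
  rw [← Ioc_union_Ioi_eq_Ioi hT.le, lintegral_union measurableSet_Ioi (Ioc_disjoint_Ioi le_rfl)]
  calc _ ≤ _ := add_le_add (lintegral_Ioc_rpow_pow_mul_min_le hs hks hA.le hT.le)
        (lintegral_Ioi_rpow_pow_mul_min_le hs hsk hc.le hT)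
    _ = _ := by
      rw [← ENNReal.ofReal_add (by positivity) (by positivity), hTpow, hTpow, ← hca]
      congr 1
      push_cast
      field_simp

theorem Real.volume_setOf_abs_le_and_abs_mul_add_lt_le {a : ℝ} (ha : 0 < a) (c R r : ℝ) :
    volume {t : ℝ | |t| ≤ R ∧ |a * t + c| < r} ≤
      ENNReal.ofReal (min (2 * R) (2 * r / a)) := by
  rw [ENNReal.ofReal_min]
  refine le_min ?_ ?_
  · calc _ ≤ volume (Icc (-R) R) := measure_mono fun t ht => abs_le.mp ht.1
      _ = _ := by rw [Real.volume_Icc]; ring_nf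
  · calc _ ≤ volume (Icc ((-c - r) / a) ((-c + r) / a)) := measure_mono fun t ht => by
          obtain ⟨h₁, h₂⟩ := abs_lt.mp ht.2
          constructor
          · rw [div_le_iff₀ ha]; linarith
          · rw [le_div_iff₀ ha]; linarith
      _ = _ := by rw [Real.volume_Icc]; congr 1; field_simp; ring

theorem EuclideanSpace.volume_le_prod_of_forall_mem {ι : Type*} [Fintype ι]
    {S : Set (EuclideanSpace ℝ ι)} (J : ι → Set ℝ) (hS : ∀ y ∈ S, ∀ i, y i ∈ J i) :
    volume S ≤ ∏ i, volume (J i) :=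
  calc volume S ≤ volume ((MeasurableEquiv.toLp 2 (ι → ℝ)).symm ⁻¹' univ.pi J) :=
        measure_mono fun y hy => by simpa using hS y hy
    _ = ∏ i, volume (J i) := by
      rw [(EuclideanSpace.volume_preserving_symm_measurableEquiv_toLp ι).measure_preimage_equiv,
        volume_pi_pi]

theorem EuclideanSpace.setOf_forall_mem_Icc_subset_closedBall (d : ℕ) :
    {x : EuclideanSpace ℝ (Fin d) | ∀ i, x i ∈ Icc (0 : ℝ) 1} ⊆
      Metric.closedBall 0 (Real.sqrt d) := by
  intro x hx
  rw [mem_closedBall_zero_iff, EuclideanSpace.norm_eq]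
  gcongr
  calc ∑ i, ‖x i‖ ^ 2 ≤ ∑ _i : Fin d, (1 : ℝ) := Finset.sum_le_sum fun i _ => by
        obtain ⟨h₀, h₁⟩ := hx i
        rw [Real.norm_eq_abs, sq_abs]; nlinarith
    _ = d := by simp

theorem volume_setOf_norm_add_lt_inter_closedBall_le {d : ℕ}
    {L : EuclideanSpace ℝ (Fin d) →ₗ[ℝ] EuclideanSpace ℝ (Fin d)} {α : ℕ → ℝ}
    {U V : EuclideanSpace ℝ (Fin d) ≃ₗᵢ[ℝ] EuclideanSpace ℝ (Fin d)}
    (hL : ∀ x, L x = U ((WithLp.equiv 2 (Fin d → ℝ)).symm fun i => α i * V x i))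
    (hα : ∀ i < d, 0 < α i) (b : EuclideanSpace ℝ (Fin d)) (R r : ℝ) :
    volume ({x | ‖L x + b‖ < r} ∩ Metric.closedBall 0 R) ≤
      ∏ i ∈ Finset.range d, ENNReal.ofReal (min (2 * R) (2 * r / α i)) := by
  have hcoord : ∀ x (i : Fin d), |α i * V x i + U.symm b i| ≤ ‖L x + b‖ := fun x i => by
    rw [hL, ← U.apply_symm_apply b, ← map_add, U.norm_map, U.apply_symm_apply]
    exact PiLp.norm_apply_le
      (((WithLp.equiv 2 (Fin d → ℝ)).symm fun j => α j * V x j) + U.symm b) i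
  set J : Fin d → Set ℝ := fun i => {t | |t| ≤ R ∧ |α i * t + U.symm b i| < r}
  have hV : MeasurePreserving V.toHomeomorph.toMeasurableEquiv := V.measurePreserving
  calc volume ({x | ‖L x + b‖ < r} ∩ Metric.closedBall 0 R)
      ≤ volume (V ⁻¹' {y | ∀ i, y i ∈ J i}) := measure_mono fun x ⟨hx, hxR⟩ i =>
        ⟨(PiLp.norm_apply_le (V x) i).trans (by simpa using hxR), (hcoord x i).trans_lt hx⟩
    _ = volume {y : EuclideanSpace ℝ (Fin d) | ∀ i, y i ∈ J i} := hV.measure_preimage_equiv _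
    _ ≤ ∏ i, volume (J i) := EuclideanSpace.volume_le_prod_of_forall_mem J fun _ hy => hy
    _ ≤ ∏ i : Fin d, ENNReal.ofReal (min (2 * R) (2 * r / α i)) :=
        Finset.prod_le_prod' fun i _ =>
          Real.volume_setOf_abs_le_and_abs_mul_add_lt_le (hα i i.2) _ _ _
    _ = _ := Fin.prod_univ_eq_prod_range (fun i => ENNReal.ofReal (min (2 * R) (2 * r / α i))) d

theorem svf_eq_of_lt_of_le {α : ℕ → ℝ} {s : ℝ} {k : ℕ} (hks : (k : ℝ) < s)
    (hsk : s ≤ k + 1) :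
    svf α s = (∏ i ∈ Finset.range k, α i) * α k ^ (s - k) := by
  have hceil : ⌈s⌉₊ = k + 1 := (Nat.ceil_eq_iff k.succ_ne_zero).mpr ⟨by simpa, by simpa⟩
  simp [svf, hceil]

theorem volume_setOf_norm_add_lt_inter_closedBall_le_mul {d k : ℕ} (hkd : k < d)
    {L : EuclideanSpace ℝ (Fin d) →ₗ[ℝ] EuclideanSpace ℝ (Fin d)} {α : ℕ → ℝ}
    {U V : EuclideanSpace ℝ (Fin d) ≃ₗᵢ[ℝ] EuclideanSpace ℝ (Fin d)}
    (hL : ∀ x, L x = U ((WithLp.equiv 2 (Fin d → ℝ)).symm fun i => α i * V x i))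
    (hα : ∀ i < d, 0 < α i) (b : EuclideanSpace ℝ (Fin d)) {R r : ℝ} (hR : 0 ≤ R)
    (hr : 0 ≤ r) :
    volume ({x | ‖L x + b‖ < r} ∩ Metric.closedBall 0 R) ≤
      ENNReal.ofReal (2 ^ k / (∏ i ∈ Finset.range k, α i) * (2 * R) ^ (d - (k + 1)) *
        (r ^ k * min (2 * R) (2 / α k * r))) := by
  refine (volume_setOf_norm_add_lt_inter_closedBall_le hL hα b R r).trans ?_
  simp only [ENNReal.ofReal_min, mul_div_right_comm 2 r]
  refine (Finset.prod_range_min_le _ _ hkd).trans_eq ?_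
  have hx : ∀ i ≤ k, 0 ≤ 2 / α i * r := fun i hi =>
    mul_nonneg (div_nonneg zero_le_two (hα i (hi.trans_lt hkd)).le) hr
  have hP : 0 ≤ ∏ i ∈ Finset.range k, 2 / α i * r :=
    Finset.prod_nonneg fun i hi => hx i (Finset.mem_range.mp hi).le
  have h2R : 0 ≤ 2 * R := by positivity
  rw [← ENNReal.ofReal_prod_of_nonneg fun i hi => hx i (Finset.mem_range.mp hi).le,
    ← ENNReal.ofReal_min, ← ENNReal.ofReal_pow h2R, ← ENNReal.ofReal_mul hP,
    ← ENNReal.ofReal_mul (mul_nonneg hP (le_min h2R (hx k le_rfl))), Finset.prod_mul_distrib,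
    Finset.prod_div_distrib, Finset.prod_const, Finset.prod_const, Finset.card_range]
  ring_nf

theorem lintegral_closedBall_norm_add_rpow_neg_le {d k : ℕ} {s R : ℝ} (hks : k < s)
    (hsk : s < k + 1) (hkd : k < d) (hR : 0 < R)
    {L : EuclideanSpace ℝ (Fin d) →ₗ[ℝ] EuclideanSpace ℝ (Fin d)} {α : ℕ → ℝ}
    {U V : EuclideanSpace ℝ (Fin d) ≃ₗᵢ[ℝ] EuclideanSpace ℝ (Fin d)}
    (hL : ∀ x, L x = U ((WithLp.equiv 2 (Fin d → ℝ)).symm fun i => α i * V x i))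
    (hα : ∀ i < d, 0 < α i) (b : EuclideanSpace ℝ (Fin d)) :
    ∫⁻ x in Metric.closedBall 0 R, ENNReal.ofReal (‖L x + b‖ ^ (-s)) ≤
      ENNReal.ofReal
        ((s / (s - k) + s / (k + 1 - s)) * 2 ^ s * (2 * R) ^ ((d : ℝ) - s) / svf α s) := by
  have hs : 0 < s := (Nat.cast_nonneg k).trans_lt hks
  have hαk : 0 < α k := hα k hkd
  have hαprod : 0 < ∏ i ∈ Finset.range k, α i :=
    Finset.prod_pos fun i hi => hα i ((Finset.mem_range.mp hi).trans hkd)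
  set A := 2 * R
  have hA : 0 < A := by positivity
  set K := 2 ^ k / (∏ i ∈ Finset.range k, α i) * A ^ (d - (k + 1)) with hK_def
  have hK : 0 ≤ K := by positivity
  have hnorm : AEMeasurable (fun x => ‖L x + b‖) (volume.restrict (Metric.closedBall 0 R)) :=
    (L.continuous_of_finiteDimensional.add continuous_const).norm.measurable.aemeasurable
  calc ∫⁻ x in Metric.closedBall 0 R, ENNReal.ofReal (‖L x + b‖ ^ (-s))
      ≤ ∫⁻ t in Ioi 0,
          volume.restrict (Metric.closedBall 0 R) {x | ‖L x + b‖ < t ^ (-s⁻¹)} :=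
        lintegral_rpow_neg_le_lintegral_measure_lt _ (fun _ => norm_nonneg _) hnorm hs
    _ ≤ ∫⁻ t in Ioi 0,
          ENNReal.ofReal K *
            ENNReal.ofReal ((t ^ (-s⁻¹)) ^ k * min A (2 / α k * t ^ (-s⁻¹))) :=
        setLIntegral_mono' measurableSet_Ioi fun t (ht : 0 < t) => by
          rw [Measure.restrict_apply' measurableSet_closedBall, ← ENNReal.ofReal_mul hK]
          exact volume_setOf_norm_add_lt_inter_closedBall_le_mul hkd hL hα b hR.le
            (Real.rpow_nonneg ht.le _)
    _ = ENNReal.ofReal K *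
          ∫⁻ t in Ioi 0,
            ENNReal.ofReal ((t ^ (-s⁻¹)) ^ k * min A (2 / α k * t ^ (-s⁻¹))) :=
        lintegral_const_mul' _ _ ENNReal.ofReal_ne_top
    _ ≤ ENNReal.ofReal K *
          ENNReal.ofReal ((s / (s - k) + s / (k + 1 - s)) * A * (2 / α k / A) ^ (s - k)) := by
        gcongr
        exact lintegral_rpow_pow_mul_min_le hs hks hsk hA (by positivity)
    _ = _ := by
        rw [← ENNReal.ofReal_mul hK, svf_eq_of_lt_of_le hks hsk.le]
        congr 1
        have h₂ : (2 / α k / A) ^ (s - k) = 2 ^ (s - k) / (α k ^ (s - k) * A ^ (s - k)) := by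
          rw [div_div, Real.div_rpow zero_le_two (by positivity), Real.mul_rpow hαk.le hA.le]
        have h₃ : A ^ (d - (k + 1)) = A ^ ((d : ℝ) - s) * A ^ (s - k) / A := by
          rw [← Real.rpow_add hA, eq_div_iff hA.ne', ← Real.rpow_natCast,
            ← Real.rpow_add_one hA.ne']
          push_cast [Nat.cast_sub hkd]
          ring_nf
        have h₄ : (2 : ℝ) ^ s = 2 ^ k * 2 ^ (s - k) := by
          rw [← Real.rpow_natCast, ← Real.rpow_add two_pos]; ring_nf
        rw [hK_def, h₂, h₃, h₄]
        field_simp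

theorem falconer_transversality_general
    (d : ℕ) (s : ℝ) (hs : 0 < s) (hsd : s < d)
    (hnonint : ∀ k : ℤ, (k : ℝ) ≠ s) :
    ∃ D₀ : ℝ, 0 < D₀ ∧
      ∀ (L : EuclideanSpace ℝ (Fin d) →ₗ[ℝ] EuclideanSpace ℝ (Fin d))
        (b : EuclideanSpace ℝ (Fin d)) (α : ℕ → ℝ)
        (U V : EuclideanSpace ℝ (Fin d) ≃ₗᵢ[ℝ] EuclideanSpace ℝ (Fin d)),
        (∀ x, L x = U ((WithLp.equiv 2 (Fin d → ℝ)).symm fun i => α i * V x i)) →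
        (∀ i < d, 0 < α i) →
        (∀ i j, i ≤ j → j < d → α j ≤ α i) →
        (∫⁻ x in {x : EuclideanSpace ℝ (Fin d) | ∀ i : Fin d, x i ∈ Set.Icc (0:ℝ) 1},
            ENNReal.ofReal (‖L x + b‖ ^ (-s)) ∂volume) ≤
          ENNReal.ofReal (D₀ / svf α s) := by
  set k := ⌈s⌉₊ - 1
  have hceil : ⌈s⌉₊ = k + 1 := (Nat.succ_pred_eq_of_pos (Nat.ceil_pos.mpr hs)).symm
  have hks : (k : ℝ) < s := by
    have := Nat.ceil_lt_add_one hs.le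
    rw [hceil] at this
    push_cast at this
    linarith
  have hsk : s < k + 1 := by
    have hle : s ≤ k + 1 := by exact_mod_cast hceil ▸ Nat.le_ceil s
    exact hle.lt_of_ne fun h => hnonint (k + 1) (by push_cast; linarith)
  have hkd : k < d := by
    have := Nat.ceil_le.mpr hsd.le
    omega
  have hsqrt : 0 < Real.sqrt d := Real.sqrt_pos.mpr (by exact_mod_cast k.zero_le.trans_lt hkd)
  have hks' : 0 < s - k := sub_pos.mpr hks
  have hsk' : 0 < k + 1 - s := sub_pos.mpr hsk
  refine ⟨(s / (s - k) + s / (k + 1 - s)) * 2 ^ s * (2 * Real.sqrt d) ^ ((d : ℝ) - s),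
    by positivity, ?_⟩
  intro L b α U V hL hα _
  exact (lintegral_mono_set (EuclideanSpace.setOf_forall_mem_Icc_subset_closedBall d)).trans
    (lintegral_closedBall_norm_add_rpow_neg_le hks hsk hkd (by positivity) hL hα b)

/-- **Falconer's transversality lemma.** Let `0 < s < d` be non-integral. Then there is
a constant `D₀ < ∞`, depending only on `d` and `s`, such that for every affine injection
`T x = L x + b` of `ℝ^d` whose linear part has singular values `α 0 ≥ … ≥ α (d-1) > 0`
(given via a singular value decomposition), one has
`∫_{[0,1]^d} |T x|^(-s) dx ≤ D₀ / Φ^s(T)`. -/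
theorem falconer_transversality
    (d : ℕ) (hd : 0 < d) (s : ℝ) (hs : 0 < s) (hsd : s < d)
    (hnonint : ∀ k : ℤ, (k : ℝ) ≠ s) :
    ∃ D₀ : ℝ, 0 < D₀ ∧
      ∀ (L : EuclideanSpace ℝ (Fin d) →ₗ[ℝ] EuclideanSpace ℝ (Fin d))
        (b : EuclideanSpace ℝ (Fin d)) (α : ℕ → ℝ)
        (U V : EuclideanSpace ℝ (Fin d) ≃ₗᵢ[ℝ] EuclideanSpace ℝ (Fin d)),
        (∀ x, L x = U ((WithLp.equiv 2 (Fin d → ℝ)).symm fun i => α i * V x i)) →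
        (∀ i < d, 0 < α i) →
        (∀ i j, i ≤ j → j < d → α j ≤ α i) →
        (∫⁻ x in {x : EuclideanSpace ℝ (Fin d) | ∀ i : Fin d, x i ∈ Set.Icc (0:ℝ) 1},
            ENNReal.ofReal (‖L x + b‖ ^ (-s)) ∂volume) ≤
          ENNReal.ofReal (D₀ / svf α s) :=
  falconer_transversality_general d s hs hsd hnonint
end
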